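/- arXiv:2602.10485 — 2 statements merged into one kernel-verified Lean document; each statement's English description precedes it below -/
import Mathlib

section
/- Soundness of abstraction: suppose R is an m-simulation relation between a high-level instance and a low-level instance such that for all (s_h, s_l) ∈ R, s_h satisfies the high-level goal iff s_l satisfies the low-level goal. If a high-level action sequence a₁, …, aₙ admits an execution from the high-level initial state reaching a goal state, then the refined sequence m(a₁), …, m(aₙ) executed from the low-level initial state reaches a low-level goal state. -/
/-- Nondeterministic high-level execution of an action sequence. -/
inductive HExec {Sh Ah : Type*} (η : Sh → Ah → Set Sh) : Sh → List Ah → Sh → Prop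
  | nil (s : Sh) : HExec η s [] s
  | cons {s t u : Sh} {a : Ah} {as : List Ah} :
      t ∈ η s a → HExec η t as u → HExec η s (a :: as) u

def IsSimulation {Sh Sl Ah Al : Type*} (η : Sh → Ah → Set Sh) (μ : Sl → Al → Sl) (m : Ah → Al)
    (R : Sh → Sl → Prop) : Prop :=
  ∀ sh sl, R sh sl → ∀ (a : Ah) (sh' : Sh), sh' ∈ η sh a → R sh' (μ sl (m a))

theorem HExec.rel_foldl {Sh Sl Ah Al : Type*} {η : Sh → Ah → Set Sh} {μ : Sl → Al → Sl}
    {m : Ah → Al} {R : Sh → Sl → Prop} (hR : IsSimulation η μ m R)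
    {sh th : Sh} {as : List Ah} (hexec : HExec η sh as th) {sl : Sl} (hs : R sh sl) :
    R th (as.foldl (fun s a => μ s (m a)) sl) := by
  induction hexec generalizing sl with
  | nil => exact hs
  | cons hstep _ ih => exact ih (hR _ _ hs _ _ hstep)

theorem stmt_7 {Sh Sl Ah Al : Type*}
    (η : Sh → Ah → Set Sh) (μ : Sl → Al → Sl) (m : Ah → Al)
    (Gh : Sh → Prop) (Gl : Sl → Prop)
    (s0h : Sh) (s0l : Sl) (R : Sh → Sl → Prop)
    (hinit : R s0h s0l)
    (hsim : ∀ sh sl, R sh sl → ∀ (a : Ah) (sh' : Sh), sh' ∈ η sh a →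
      R sh' (μ sl (m a)))
    (hgoal : ∀ sh sl, R sh sl → (Gh sh ↔ Gl sl))
    (as : List Ah) (t : Sh)
    (hexec : HExec η s0h as t) (ht : Gh t) :
    Gl (as.foldl (fun s a => μ s (m a)) s0l) :=
  (hgoal _ _ (hexec.rel_foldl hsim hinit)).mp ht
end

section
/- If the refined-tree construction (depth-first search guided by a high-level plan of length k) returns Success, then there exists a low-level action sequence of length at most k that, executed from the low-level initial state, reaches a state satisfying the low-level goal, and each action in the sequence is a refinement of the corresponding high-level action. -/
variable {Sh Sl Ah Al : Type*}

/-- Success predicate of the DFS refined-tree construction, guided by the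
remaining suffix of the high-level plan. `μh` is the deterministic high-level
successor, `μl` the low-level transition, `abstr` computes the abstraction of
a low-level state, `refines al ah` means `al` refines `ah`, and `app` is
low-level applicability. DFS succeeds at depth ≥ k (plan exhausted) when both
goals hold; otherwise it tries every applicable refining low-level action
whose successor's abstraction matches the expected high-level successor. -/
inductive DFSSuccess (μh : Sh → Ah → Sh) (μl : Sl → Al → Sl)
    (abstr : Sl → Sh) (refines : Al → Ah → Prop) (app : Sl → Al → Prop)
    (Gh : Sh → Prop) (Gl : Sl → Prop) : List Ah → Sh → Sl → Prop
  | done {sh : Sh} {sl : Sl} : Gh sh → Gl sl →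
      DFSSuccess μh μl abstr refines app Gh Gl [] sh sl
  | step {ah : Ah} {rest : List Ah} {sh : Sh} {sl : Sl} (al : Al) :
      app sl al → refines al ah → abstr (μl sl al) = μh sh ah →
      DFSSuccess μh μl abstr refines app Gh Gl rest (μh sh ah) (μl sl al) →
      DFSSuccess μh μl abstr refines app Gh Gl (ah :: rest) sh sl

namespace DFSSuccess

variable {μh : Sh → Ah → Sh} {μl : Sl → Al → Sl} {abstr : Sl → Sh} {refines : Al → Ah → Prop}
  {app : Sl → Al → Prop} {Gh : Sh → Prop} {Gl : Sl → Prop}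

theorem exists_refining_plan {plan : List Ah} {sh : Sh} {sl : Sl}
    (h : DFSSuccess μh μl abstr refines app Gh Gl plan sh sl) :
    ∃ las : List Al, List.Forall₂ refines las plan ∧ Gl (las.foldl μl sl) := by
  induction h with
  | done _ hgl => exact ⟨[], .nil, hgl⟩
  | step al _ href _ _ ih =>
    obtain ⟨las, hrefs, hgoal⟩ := ih
    exact ⟨al :: las, .cons href hrefs, hgoal⟩

end DFSSuccess

theorem stmt_19 (μh : Sh → Ah → Sh) (μl : Sl → Al → Sl)
    (abstr : Sl → Sh) (refines : Al → Ah → Prop) (app : Sl → Al → Prop)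
    (Gh : Sh → Prop) (Gl : Sl → Prop)
    (plan : List Ah) (sh0 : Sh) (sl0 : Sl)
    (h : DFSSuccess μh μl abstr refines app Gh Gl plan sh0 sl0) :
    ∃ las : List Al,
      las.length ≤ plan.length ∧
      List.Forall₂ refines las (plan.take las.length) ∧
      Gl (las.foldl μl sl0) := by
  obtain ⟨las, hrefs, hgoal⟩ := h.exists_refining_plan
  have hlen : las.length = plan.length := hrefs.length_eq
  refine ⟨las, hlen.le, ?_, hgoal⟩
  rwa [hlen, List.take_length]
end
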